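/- For a bipartition (ρ;σ) of n and a C-distinguished bipartition (μ;ν) ∈ Q_n^C, the following are equivalent: (1) Φ̂^C(Φ^C(ρ;σ)) = (μ;ν); (2) Φ^C(ρ;σ) = Φ^C(μ;ν); (3) (ρ;σ) ≤ (μ;ν), and (μ;ν) is the minimum among all C-distinguished bipartitions (τ;υ) with (ρ;σ) ≤ (τ;υ). -/

import Mathlib

open Finset

/-- Partial sum of the first `k` terms of a sequence of naturals. -/
def psum (π : ℕ → ℕ) (k : ℕ) : ℕ := ∑ i ∈ Finset.range k, π i

/-- A composition of `n`: almost all terms zero, summing to `n`. -/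
def IsComposition (n : ℕ) (π : ℕ → ℕ) : Prop :=
  ∃ N, (∀ i, N ≤ i → π i = 0) ∧ psum π N = n

/-- Dominance order: `l` dominates `π`. -/
def Dominates (l π : ℕ → ℕ) : Prop := ∀ k, psum π k ≤ psum l k

/-- A partition: weakly decreasing sequence. -/
def IsPartition (π : ℕ → ℕ) : Prop := ∀ i, π (i + 1) ≤ π i

/-- A quasi-partition: `π i ≥ π (i+2)` for all `i`. -/
def IsQuasiPartition (π : ℕ → ℕ) : Prop := ∀ i, π (i + 2) ≤ π i

/-- Interleaving of two sequences: `(ρ₁, σ₁, ρ₂, σ₂, …)` (0-indexed). -/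
def interleave (ρ σ : ℕ → ℕ) (i : ℕ) : ℕ :=
  if i % 2 = 0 then ρ (i / 2) else σ (i / 2)

/-- A bipartition of `n`: a pair of partitions whose interleaving sums to `n`. -/
def IsBipartition (n : ℕ) (ρ σ : ℕ → ℕ) : Prop :=
  IsPartition ρ ∧ IsPartition σ ∧ IsComposition n (interleave ρ σ)

/-- Interleaved dominance order on bipartitions: `(ρ;σ) ≤ (μ;ν)`. -/
def BiLE (ρ σ μ ν : ℕ → ℕ) : Prop :=
  Dominates (interleave μ ν) (interleave ρ σ)

/-- The map `Φ^C` on sequences: replace a consecutive pair `2s < 2t`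
by `s+t, s+t` (pointwise description; replacements never overlap for
quasi-partitions). -/
def phiC (π : ℕ → ℕ) : ℕ → ℕ
  | 0 => if π 0 < π 1 then (π 0 + π 1) / 2 else π 0
  | (j + 1) =>
      if π (j + 1) < π (j + 2) then (π (j + 1) + π (j + 2)) / 2
      else if π j < π (j + 1) then (π j + π (j + 1)) / 2
      else π (j + 1)

/-- `Φ^C` of a bipartition: apply `phiC` to the doubled interleaving. -/
def PhiC (ρ σ : ℕ → ℕ) : ℕ → ℕ := phiC (fun i => 2 * interleave ρ σ i)

/-- Membership in `P^C_{2n}`: partition of `2n` with every odd part of even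
multiplicity. -/
def IsPC (n : ℕ) (l : ℕ → ℕ) : Prop :=
  IsPartition l ∧ IsComposition (2 * n) l ∧
    ∀ a : ℕ, Odd a → Even ({i | l i = a}.ncard)

/-- C-distinguished: `μ i ≥ ν i - 1` and `ν i ≥ μ (i+1) - 1`. -/
def QC (μ ν : ℕ → ℕ) : Prop :=
  ∀ i, ν i ≤ μ i + 1 ∧ μ (i + 1) ≤ ν i + 1

/-- B-distinguished: `μ i ≥ ν i - 2` and `ν i ≥ μ (i+1)`. -/
def QB (μ ν : ℕ → ℕ) : Prop :=
  ∀ i, ν i ≤ μ i + 2 ∧ μ (i + 1) ≤ ν i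

/-- Special: `μ i ≥ ν i - 1` and `ν i ≥ μ (i+1)`. -/
def QS (μ ν : ℕ → ℕ) : Prop :=
  ∀ i, ν i ≤ μ i + 1 ∧ μ (i + 1) ≤ ν i

/-- The condition defining `Q_n^{B,2}`: `μ i ≥ ν i - 2`. -/
def QB2 (μ ν : ℕ → ℕ) : Prop := ∀ i, ν i ≤ μ i + 2

/-- For an antitone sequence, the starting index of the run of equal values
containing index `i`. -/
noncomputable def runStart (l : ℕ → ℕ) (i : ℕ) : ℕ := {j | l i < l j}.ncard

/-- The map `Φ̂^C`, pointwise: halve even parts; replace an (even-length)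
maximal run of an odd part `2k+1` with `k, k+1, k, k+1, …`. -/
noncomputable def hphiC (l : ℕ → ℕ) (i : ℕ) : ℕ :=
  if Even (l i) then l i / 2
  else if Even (i - runStart l i) then l i / 2 else l i / 2 + 1

/-- Partial sums of an integer sequence. -/
def zsum (π : ℕ → ℤ) (k : ℕ) : ℤ := ∑ i ∈ Finset.range k, π i

/-- Dominance order on integer sequences. -/
def ZDominates (l π : ℕ → ℤ) : Prop := ∀ k, zsum π k ≤ zsum l k

/-- The interleaved integer sequence `(2ρ₁+1, 2σ₁−1, 2ρ₂+1, 2σ₂−1, …)`. -/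
def interB (ρ σ : ℕ → ℕ) (i : ℕ) : ℤ :=
  if i % 2 = 0 then 2 * (ρ (i / 2) : ℤ) + 1 else 2 * (σ (i / 2) : ℤ) - 1

/-- The map `Φ^B` on integer sequences: replace a consecutive pair `s < t`
by `(s+t)/2, (s+t)/2` (pointwise description). -/
def phiB (π : ℕ → ℤ) : ℕ → ℤ
  | 0 => if π 0 < π 1 then (π 0 + π 1) / 2 else π 0
  | (j + 1) =>
      if π (j + 1) < π (j + 2) then (π (j + 1) + π (j + 2)) / 2
      else if π j < π (j + 1) then (π j + π (j + 1)) / 2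
      else π (j + 1)

/-- `Φ^B` of a bipartition. -/
def PhiB (ρ σ : ℕ → ℕ) : ℕ → ℤ := phiB (interB ρ σ)

/-- Membership in `P^B_{2n+1}` for an integer sequence: nonnegative, weakly
decreasing, summing to `2n+1`, with every (positive) even part of even
multiplicity. -/
def IsPB (n : ℕ) (l : ℕ → ℤ) : Prop :=
  (∀ i, 0 ≤ l i) ∧ (∀ i, l (i + 1) ≤ l i) ∧
  (∃ N, (∀ i, N ≤ i → l i = 0) ∧ zsum l N = 2 * n + 1) ∧
  ∀ a : ℤ, 0 < a → Even a → Even ({i | l i = a}.ncard)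

/-- Membership in `P^B_{2n+1}` for a natural-number partition. -/
def IsPBN (n : ℕ) (l : ℕ → ℕ) : Prop :=
  IsPartition l ∧ IsComposition (2 * n + 1) l ∧
    ∀ a : ℕ, 0 < a → Even a → Even ({i | l i = a}.ncard)

/-- The map `Φ̂^B`, pointwise (0-indexed, so the paper's index `i` is `j+1`):
an odd part `λ_i` becomes `(λ_i + (−1)^i)/2`; a maximal run of an even part
`2k` starting at (0-indexed) position `s` becomes `k, k, …` if `s` is odd
(paper's `i` even) and `k−1, k+1, k−1, k+1, …` if `s` is even (paper's `i`
odd). -/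
noncomputable def hphiB (l : ℕ → ℕ) (j : ℕ) : ℕ :=
  if Odd (l j) then (if Even j then (l j - 1) / 2 else (l j + 1) / 2)
  else
    if Odd (runStart l j) then l j / 2
    else if Even (j - runStart l j) then l j / 2 - 1 else l j / 2 + 1

/-- First component of the special closure `(ρ;σ)°`. -/
def scRho (ρ σ : ℕ → ℕ) : ℕ → ℕ
  | 0 => if ρ 0 + 1 < σ 0 then (ρ 0 + σ 0) / 2 else ρ 0
  | (i + 1) =>
      if ρ (i + 1) + 1 < σ (i + 1) then (ρ (i + 1) + σ (i + 1)) / 2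
      else if σ i < ρ (i + 1) then (σ i + ρ (i + 1)) / 2
      else ρ (i + 1)

/-- Second component of the special closure `(ρ;σ)°`. -/
def scSigma (ρ σ : ℕ → ℕ) (i : ℕ) : ℕ :=
  if ρ i + 1 < σ i then (ρ i + σ i + 1) / 2
  else if σ i < ρ (i + 1) then (σ i + ρ (i + 1) + 1) / 2
  else σ i

/-- First component of the closure `(ρ;σ)~` into `Q_n^{B,2}`. -/
def tRho (ρ σ : ℕ → ℕ) (i : ℕ) : ℕ :=
  if ρ i + 2 < σ i then (ρ i + σ i + 1) / 2 - 1 else ρ i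

/-- Second component of the closure `(ρ;σ)~` into `Q_n^{B,2}`. -/
def tSigma (ρ σ : ℕ → ℕ) (i : ℕ) : ℕ :=
  if ρ i + 2 < σ i then (ρ i + σ i) / 2 + 1 else σ i

/-- First component of the closure `(ρ;σ)^B` into `Q_n^B`. -/
def bRho (ρ σ : ℕ → ℕ) : ℕ → ℕ
  | 0 => if ρ 0 + 2 < σ 0 then (ρ 0 + σ 0 + 1) / 2 - 1 else ρ 0
  | (i + 1) =>
      if ρ (i + 1) + 2 < σ (i + 1) then (ρ (i + 1) + σ (i + 1) + 1) / 2 - 1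
      else if σ i < ρ (i + 1) then (σ i + ρ (i + 1)) / 2
      else ρ (i + 1)

/-- Second component of the closure `(ρ;σ)^B` into `Q_n^B`. -/
def bSigma (ρ σ : ℕ → ℕ) (i : ℕ) : ℕ :=
  if ρ i + 2 < σ i then (ρ i + σ i) / 2 + 1
  else if σ i < ρ (i + 1) then (σ i + ρ (i + 1) + 1) / 2
  else σ i

/-- First component of the closure `(ρ;σ)^C` into `Q_n^C`. -/
def cRho (ρ σ : ℕ → ℕ) : ℕ → ℕ
  | 0 => if ρ 0 + 1 < σ 0 then (ρ 0 + σ 0) / 2 else ρ 0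
  | (i + 1) =>
      if ρ (i + 1) + 1 < σ (i + 1) then (ρ (i + 1) + σ (i + 1)) / 2
      else if σ i + 1 < ρ (i + 1) then (σ i + ρ (i + 1) + 1) / 2
      else ρ (i + 1)

/-- Second component of the closure `(ρ;σ)^C` into `Q_n^C`. -/
def cSigma (ρ σ : ℕ → ℕ) (i : ℕ) : ℕ :=
  if ρ i + 1 < σ i then (ρ i + σ i + 1) / 2
  else if σ i + 1 < ρ (i + 1) then (σ i + ρ (i + 1)) / 2
  else σ i

/-!
A bipartition `(μ;ν)` lies in `Q_n^C` exactly when its interleaving `w` satisfies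
`w (j + 2) ≤ w j` and `w (j + 1) ≤ w j + 1`, so both maps can be studied on single sequences.
On such a `w`, `Φ^C` only turns each ascent `k, k + 1` into `2k + 1, 2k + 1`. These pairs tile
every run of an odd part, so `Φ̂^C` recovers them from the parity of the distance to the start of
the run, and `Φ̂^C ∘ Φ^C` is the identity on `Q_n^C`. The closure `(ρ;σ)^C` averages every pair
of neighbours `a, b` with `a + 1 < b`; it leaves `Φ^C` unchanged and is the least element of
`Q_n^C` dominating `(ρ;σ)`. Hence each of the three conditions says `(μ;ν) = (ρ;σ)^C`.
-/

lemma psum_succ (π : ℕ → ℕ) (k : ℕ) : psum π (k + 1) = psum π k + π k :=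
  Finset.sum_range_succ _ _

theorem Dominates.antisymm {l m : ℕ → ℕ} (hlm : Dominates l m) (hml : Dominates m l) :
    l = m := by
  funext k
  have h := le_antisymm (hml k) (hlm k)
  have h' := le_antisymm (hml (k + 1)) (hlm (k + 1))
  rw [psum_succ, psum_succ] at h'
  omega

@[simp]
lemma interleave_two_mul (ρ σ : ℕ → ℕ) (i : ℕ) : interleave ρ σ (2 * i) = ρ i := by
  simp [interleave]

@[simp]
lemma interleave_two_mul_add_one (ρ σ : ℕ → ℕ) (i : ℕ) :
    interleave ρ σ (2 * i + 1) = σ i := by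
  simp [interleave, Nat.add_mod, Nat.add_div]

lemma interleave_two_mul_add_two (ρ σ : ℕ → ℕ) (i : ℕ) :
    interleave ρ σ (2 * i + 2) = ρ (i + 1) := by
  rw [← interleave_two_mul ρ σ (i + 1), Nat.mul_succ]

lemma isQuasiPartition_interleave_iff {ρ σ : ℕ → ℕ} :
    IsQuasiPartition (interleave ρ σ) ↔ IsPartition ρ ∧ IsPartition σ := by
  refine ⟨fun h => ⟨fun i => ?_, fun i => ?_⟩, fun ⟨hρ, hσ⟩ j => ?_⟩
  · simpa [interleave_two_mul_add_two] using h (2 * i)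
  · simpa [show 2 * i + 1 + 2 = 2 * (i + 1) + 1 by ring] using h (2 * i + 1)
  · obtain ⟨i, rfl | rfl⟩ := Nat.even_or_odd' j
    · simpa [interleave_two_mul_add_two] using hρ i
    · simpa [show 2 * i + 1 + 2 = 2 * (i + 1) + 1 by ring] using hσ i

def AscentLeOne (v : ℕ → ℕ) : Prop := ∀ j, v (j + 1) ≤ v j + 1

lemma ascentLeOne_interleave_iff {μ ν : ℕ → ℕ} :
    AscentLeOne (interleave μ ν) ↔ QC μ ν := by
  refine ⟨fun h i => ⟨?_, ?_⟩, fun h j => ?_⟩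
  · simpa using h (2 * i)
  · simpa [interleave_two_mul_add_two] using h (2 * i + 1)
  · obtain ⟨i, rfl | rfl⟩ := Nat.even_or_odd' j
    · simpa using (h i).1
    · simpa [interleave_two_mul_add_two] using (h i).2

section runStart

variable {l : ℕ → ℕ}

lemma runStart_eq_of_forall_lt_iff {j s : ℕ} (h : ∀ k, l j < l k ↔ k < s) :
    runStart l j = s := by
  have hset : {k | l j < l k} = ↑(Finset.range s) := by
    ext k
    simp [h k]
  rw [runStart, hset, Set.ncard_coe_finset, Finset.card_range]

lemma runStart_succ_of_eq {j : ℕ} (h : l (j + 1) = l j) : runStart l (j + 1) = runStart l j := by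
  rw [runStart, runStart, h]

lemma runStart_of_forall_lt_lt (hl : Antitone l) {j : ℕ} (h : ∀ k < j, l j < l k) :
    runStart l j = j :=
  runStart_eq_of_forall_lt_iff fun k =>
    ⟨fun hk => lt_of_not_ge fun hjk => (hl hjk).not_gt hk, h k⟩

lemma runStart_zero (hl : Antitone l) : runStart l 0 = 0 :=
  runStart_of_forall_lt_lt hl fun _ hk => absurd hk (Nat.not_lt_zero _)

lemma runStart_succ_of_lt (hl : Antitone l) {j : ℕ} (h : l (j + 1) < l j) :
    runStart l (j + 1) = j + 1 :=
  runStart_of_forall_lt_lt hl fun _ hk => h.trans_le (hl (Nat.le_of_lt_succ hk))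

lemma runStart_le (hl : Antitone l) (j : ℕ) : runStart l j ≤ j := by
  have hsub : {k | l j < l k} ⊆ ↑(Finset.range j) := fun k hk =>
    Finset.mem_coe.2 (Finset.mem_range.2 (lt_of_not_ge fun hjk => (hl hjk).not_gt hk))
  simpa [runStart] using Set.ncard_le_ncard hsub (Finset.range j).finite_toSet

/-- If the odd entries of `l` are tiled by pairs `(j, j + 1)` marked by `S j`, then within a
run of an odd value the pairs start at even distance from the start of the run. -/
theorem even_sub_runStart_iff (hl : Antitone l) {S : ℕ → Prop}
    (hS : ∀ j, S j → l (j + 1) = l j) (hS₀ : Odd (l 0) → S 0)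
    (hS_succ : ∀ j, Odd (l (j + 1)) → (S (j + 1) ↔ ¬ S j)) :
    ∀ j, Odd (l j) → (S j ↔ Even (j - runStart l j))
  | 0, h => by simp [runStart_zero hl, hS₀ h]
  | j + 1, h => by
    rcases (hl (Nat.le_succ j)).lt_or_eq with hlt | heq
    · have hSj : ¬ S j := fun hSj => hlt.ne (hS j hSj)
      simp [runStart_succ_of_lt hl hlt, (hS_succ j h).2 hSj]
    · have ih := even_sub_runStart_iff hl hS hS₀ hS_succ j (heq ▸ h)
      have hle := runStart_le hl j
      rw [hS_succ j h, runStart_succ_of_eq heq, ih, Nat.sub_add_comm hle, Nat.even_add_one]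

end runStart

section phiC

variable {v : ℕ → ℕ}

lemma phiC_two_mul_of_ascent (hq : IsQuasiPartition v) {j : ℕ}
    (h : v (j + 1) = v j + 1) :
    phiC (fun i => 2 * v i) j = 2 * v j + 1 ∧ phiC (fun i => 2 * v i) (j + 1) = 2 * v j + 1 := by
  rcases j with _ | j
  · have : v 2 ≤ v 0 := hq 0
    simp only [phiC, Nat.zero_add] at h ⊢
    split_ifs <;> omega
  · have : v (j + 3) ≤ v (j + 1) := hq (j + 1)
    simp only [phiC, Nat.add_assoc, Nat.reduceAdd] at h ⊢
    split_ifs <;> omega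

lemma phiC_two_mul_zero_of_not_ascent (hv : AscentLeOne v) (h : v 1 ≠ v 0 + 1) :
    phiC (fun i => 2 * v i) 0 = 2 * v 0 := by
  have : v 1 ≤ v 0 + 1 := hv 0
  simp only [phiC]
  split_ifs <;> omega

lemma phiC_two_mul_succ_of_not_ascent (hv : AscentLeOne v) {j : ℕ}
    (h₁ : v (j + 2) ≠ v (j + 1) + 1) (h₀ : v (j + 1) ≠ v j + 1) :
    phiC (fun i => 2 * v i) (j + 1) = 2 * v (j + 1) := by
  have : v (j + 1) ≤ v j + 1 := hv j
  have : v (j + 2) ≤ v (j + 1) + 1 := hv (j + 1)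
  simp only [phiC]
  split_ifs <;> omega

lemma antitone_phiC_two_mul (hq : IsQuasiPartition v) (hv : AscentLeOne v) :
    Antitone (phiC (fun i => 2 * v i)) := by
  refine antitone_nat_of_succ_le fun j => ?_
  rcases j with _ | j
  · have : v 2 ≤ v 0 := hq 0
    have : v 1 ≤ v 0 + 1 := hv 0
    have : v 2 ≤ v 1 + 1 := hv 1
    simp only [phiC, Nat.zero_add]
    split_ifs <;> omega
  · have : v (j + 2) ≤ v j := hq j
    have : v (j + 3) ≤ v (j + 1) := hq (j + 1)
    have : v (j + 1) ≤ v j + 1 := hv j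
    have : v (j + 2) ≤ v (j + 1) + 1 := hv (j + 1)
    have : v (j + 3) ≤ v (j + 2) + 1 := hv (j + 2)
    simp only [phiC, Nat.add_assoc, Nat.reduceAdd]
    split_ifs <;> omega

theorem hphiC_phiC_two_mul (hq : IsQuasiPartition v) (hv : AscentLeOne v) :
    hphiC (phiC (fun i => 2 * v i)) = v := by
  have hl := antitone_phiC_two_mul hq hv
  have hasc := fun j => phiC_two_mul_of_ascent hq (j := j)
  have heven : ∀ k, ¬ Odd (2 * k) := fun k => Nat.not_odd_iff_even.2 (even_two_mul k)
  have hpar := even_sub_runStart_iff hl (S := fun j => v (j + 1) = v j + 1)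
    (fun j hj => (hasc j hj).2.trans (hasc j hj).1.symm)
    (fun h => by_contra fun h₀ => heven _ (phiC_two_mul_zero_of_not_ascent hv h₀ ▸ h))
    (fun j h => by
      by_cases h₀ : v (j + 1) = v j + 1
      · have : v (j + 1 + 1) ≤ v j := hq j
        exact iff_of_false (by omega) (not_not.2 h₀)
      · refine iff_of_true (by_contra fun h₁ => heven (v (j + 1)) ?_) h₀
        rwa [phiC_two_mul_succ_of_not_ascent hv h₁ h₀] at h)
  funext j
  by_cases h : v (j + 1) = v j + 1
  · have hj := (hasc j h).1
    have := (hpar j (hj ▸ odd_two_mul_add_one _)).1 h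
    simp [hphiC, hj, this]
    omega
  · rcases j with _ | j
    · simp [hphiC, phiC_two_mul_zero_of_not_ascent hv h]
    · by_cases h' : v (j + 1) = v j + 1
      · have hj := (hasc j h').2
        have := mt (hpar (j + 1) (hj ▸ odd_two_mul_add_one _)).2 h
        simp [hphiC, hj, this]
        omega
      · simp [hphiC, phiC_two_mul_succ_of_not_ascent hv h h']

end phiC

/-- Sequence form of the closure `(ρ;σ)^C`: each adjacent pair `a, b` with `a + 1 < b` is
replaced by `⌊(a + b)/2⌋, ⌈(a + b)/2⌉`. -/
def closureC (w : ℕ → ℕ) : ℕ → ℕ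
  | 0 => if w 0 + 1 < w 1 then (w 0 + w 1) / 2 else w 0
  | j + 1 =>
      if w (j + 1) + 1 < w (j + 2) then (w (j + 1) + w (j + 2)) / 2
      else if w j + 1 < w (j + 1) then (w j + w (j + 1) + 1) / 2
      else w (j + 1)

section closureC

variable {w : ℕ → ℕ}

lemma psum_closureC_succ (hw : IsQuasiPartition w) (j : ℕ) :
    psum (closureC w) (j + 1) =
      psum w (j + 1) + if w j + 1 < w (j + 1) then (w (j + 1) - w j) / 2 else 0 := by
  induction j with
  | zero =>
    rw [psum_succ, psum_succ]
    simp only [psum, Finset.sum_range_zero, closureC, Nat.zero_add]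
    split_ifs <;> omega
  | succ j ih =>
    have : w (j + 2) ≤ w j := hw j
    rw [psum_succ, ih, psum_succ w (j + 1)]
    simp only [closureC, Nat.add_assoc, Nat.reduceAdd]
    split_ifs <;> omega

lemma dominates_closureC (hw : IsQuasiPartition w) : Dominates (closureC w) w := by
  rintro (_ | j)
  · exact le_rfl
  · rw [psum_closureC_succ hw]
    exact Nat.le_add_right _ _

lemma Dominates.closureC_of_ascentLeOne {v : ℕ → ℕ} (hw : IsQuasiPartition w)
    (hv : AscentLeOne v) (hvw : Dominates v w) : Dominates v (closureC w) := by
  rintro (_ | j)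
  · exact le_rfl
  · have h₀ := hvw j
    have h₁ := hvw (j + 1)
    have h₂ := hvw (j + 2)
    have : v (j + 1) ≤ v j + 1 := hv j
    rw [psum_succ, psum_succ] at h₁
    rw [psum_succ, psum_succ, psum_succ v (j + 1), psum_succ v j] at h₂
    rw [psum_closureC_succ hw, psum_succ, psum_succ]
    split_ifs <;> omega

lemma isQuasiPartition_closureC (hw : IsQuasiPartition w) : IsQuasiPartition (closureC w) := by
  rintro (_ | j)
  · have : w 2 ≤ w 0 := hw 0
    have : w 3 ≤ w 1 := hw 1
    simp only [closureC, Nat.reduceAdd]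
    split_ifs <;> omega
  · have : w (j + 2) ≤ w j := hw j
    have : w (j + 3) ≤ w (j + 1) := hw (j + 1)
    have : w (j + 4) ≤ w (j + 2) := hw (j + 2)
    simp only [closureC, Nat.add_assoc, Nat.reduceAdd]
    split_ifs <;> omega

lemma ascentLeOne_closureC (hw : IsQuasiPartition w) : AscentLeOne (closureC w) := by
  rintro (_ | j)
  · have : w 2 ≤ w 0 := hw 0
    simp only [closureC, Nat.reduceAdd]
    split_ifs <;> omega
  · have : w (j + 2) ≤ w j := hw j
    have : w (j + 3) ≤ w (j + 1) := hw (j + 1)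
    simp only [closureC, Nat.add_assoc, Nat.reduceAdd]
    split_ifs <;> omega

lemma isComposition_closureC {n : ℕ} (hw : IsQuasiPartition w) (h : IsComposition n w) :
    IsComposition n (closureC w) := by
  obtain ⟨N, hz, hN⟩ := h
  refine ⟨N + 1, fun i hi => ?_, ?_⟩
  · obtain ⟨j, rfl⟩ : ∃ j, i = j + 1 := ⟨i - 1, by omega⟩
    simp [closureC, hz j (by omega), hz (j + 1) (by omega), hz (j + 2) (by omega)]
  · rw [psum_closureC_succ hw, psum_succ, hz N le_rfl, hz (N + 1) (by omega), hN]
    simp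

lemma phiC_two_mul_closureC (hw : IsQuasiPartition w) :
    phiC (fun i => 2 * closureC w i) = phiC (fun i => 2 * w i) := by
  funext j
  rcases j with _ | _ | j
  · have : w 2 ≤ w 0 := hw 0
    simp only [phiC, closureC, Nat.zero_add]
    split_ifs <;> omega
  · have : w 2 ≤ w 0 := hw 0
    have : w 3 ≤ w 1 := hw 1
    simp only [phiC, closureC, Nat.zero_add, Nat.reduceAdd]
    split_ifs <;> omega
  · have : w (j + 2) ≤ w j := hw j
    have : w (j + 3) ≤ w (j + 1) := hw (j + 1)
    have : w (j + 4) ≤ w (j + 2) := hw (j + 2)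
    simp only [phiC, closureC, Nat.add_assoc, Nat.reduceAdd]
    split_ifs <;> omega

end closureC

lemma interleave_cRho_cSigma {ρ σ : ℕ → ℕ} (hρ : IsPartition ρ) :
    interleave (cRho ρ σ) (cSigma ρ σ) = closureC (interleave ρ σ) := by
  funext j
  obtain ⟨i, rfl | rfl⟩ := Nat.even_or_odd' j
  · rcases i with _ | i
    · simp [interleave, cRho, closureC]
    · rw [interleave_two_mul, Nat.mul_succ]
      simp [cRho, closureC, interleave_two_mul_add_two,
        show 2 * i + 1 + 2 = 2 * (i + 1) + 1 by ring]
  · have : ρ (i + 1) ≤ ρ i := hρ i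
    simp only [interleave_two_mul_add_one, cSigma, closureC, interleave_two_mul,
      interleave_two_mul_add_two]
    split_ifs <;> omega

section bipartition

variable {n : ℕ} {ρ σ μ ν τ υ : ℕ → ℕ}

theorem hphiC_PhiC (hμ : IsPartition μ) (hν : IsPartition ν) (h : QC μ ν) :
    hphiC (PhiC μ ν) = interleave μ ν :=
  hphiC_phiC_two_mul (isQuasiPartition_interleave_iff.2 ⟨hμ, hν⟩)
    (ascentLeOne_interleave_iff.2 h)

theorem PhiC_eq_PhiC_iff (hτ : IsPartition τ) (hυ : IsPartition υ) (hτυ : QC τ υ)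
    (hμ : IsPartition μ) (hν : IsPartition ν) (hμν : QC μ ν) :
    PhiC τ υ = PhiC μ ν ↔ interleave τ υ = interleave μ ν := by
  refine ⟨fun h => ?_, fun h => by rw [PhiC, h]; rfl⟩
  rw [← hphiC_PhiC hτ hυ hτυ, h, hphiC_PhiC hμ hν hμν]

theorem BiLE.antisymm (h₁ : BiLE ρ σ μ ν) (h₂ : BiLE μ ν ρ σ) :
    interleave ρ σ = interleave μ ν :=
  Dominates.antisymm h₂ h₁

lemma isBipartition_cRho_cSigma (h : IsBipartition n ρ σ) :
    IsBipartition n (cRho ρ σ) (cSigma ρ σ) := by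
  obtain ⟨hρ, hσ, hn⟩ := h
  have hw := isQuasiPartition_interleave_iff.2 ⟨hρ, hσ⟩
  rw [IsBipartition, ← and_assoc, ← isQuasiPartition_interleave_iff, interleave_cRho_cSigma hρ]
  exact ⟨isQuasiPartition_closureC hw, isComposition_closureC hw hn⟩

lemma qc_cRho_cSigma (hρ : IsPartition ρ) (hσ : IsPartition σ) :
    QC (cRho ρ σ) (cSigma ρ σ) := by
  rw [← ascentLeOne_interleave_iff, interleave_cRho_cSigma hρ]
  exact ascentLeOne_closureC (isQuasiPartition_interleave_iff.2 ⟨hρ, hσ⟩)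

lemma biLE_cRho_cSigma (hρ : IsPartition ρ) (hσ : IsPartition σ) :
    BiLE ρ σ (cRho ρ σ) (cSigma ρ σ) := by
  rw [BiLE, interleave_cRho_cSigma hρ]
  exact dominates_closureC (isQuasiPartition_interleave_iff.2 ⟨hρ, hσ⟩)

lemma cRho_cSigma_biLE_of_biLE (hρ : IsPartition ρ) (hσ : IsPartition σ) (hτυ : QC τ υ)
    (h : BiLE ρ σ τ υ) : BiLE (cRho ρ σ) (cSigma ρ σ) τ υ := by
  rw [BiLE, interleave_cRho_cSigma hρ]
  exact h.closureC_of_ascentLeOne (isQuasiPartition_interleave_iff.2 ⟨hρ, hσ⟩)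
    (ascentLeOne_interleave_iff.2 hτυ)

lemma PhiC_cRho_cSigma (hρ : IsPartition ρ) (hσ : IsPartition σ) :
    PhiC (cRho ρ σ) (cSigma ρ σ) = PhiC ρ σ := by
  rw [PhiC, interleave_cRho_cSigma hρ]
  exact phiC_two_mul_closureC (isQuasiPartition_interleave_iff.2 ⟨hρ, hσ⟩)

end bipartition

/-- for `(ρ;σ) ∈ Q_n` and `(μ;ν) ∈ Q_n^C`, the conditions
`Φ̂^C(Φ^C(ρ;σ)) = (μ;ν)`, `Φ^C(ρ;σ) = Φ^C(μ;ν)`, and `(μ;ν)` being the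
minimum C-distinguished bipartition dominating `(ρ;σ)` are equivalent. -/
theorem hphiC_phiC_eq_iff (n : ℕ) (ρ σ μ ν : ℕ → ℕ)
    (h1 : IsBipartition n ρ σ) (h2 : IsBipartition n μ ν) (h3 : QC μ ν) :
    ((∀ i, hphiC (PhiC ρ σ) i = interleave μ ν i) ↔
      (∀ i, PhiC ρ σ i = PhiC μ ν i)) ∧
    ((∀ i, PhiC ρ σ i = PhiC μ ν i) ↔
      (BiLE ρ σ μ ν ∧ ∀ τ υ : ℕ → ℕ, IsBipartition n τ υ → QC τ υ →
        BiLE ρ σ τ υ → BiLE μ ν τ υ)) := by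
  have hcb := isBipartition_cRho_cSigma h1
  obtain ⟨hρ, hσ, -⟩ := h1
  obtain ⟨hμ, hν, -⟩ := h2
  have hc := qc_cRho_cSigma hρ hσ
  have hPhi := PhiC_cRho_cSigma hρ hσ
  simp only [← funext_iff]
  rw [← hPhi, PhiC_eq_PhiC_iff hcb.1 hcb.2.1 hc hμ hν h3, hphiC_PhiC hcb.1 hcb.2.1 hc, eq_comm]
  refine ⟨Iff.rfl, fun h => ⟨?_, fun τ υ _ hτυ hle => ?_⟩, fun ⟨hle, hmin⟩ => ?_⟩
  · rw [BiLE, h]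
    exact biLE_cRho_cSigma hρ hσ
  · rw [BiLE, h]
    exact cRho_cSigma_biLE_of_biLE hρ hσ hτυ hle
  · exact BiLE.antisymm (hmin _ _ hcb hc (biLE_cRho_cSigma hρ hσ))
      (cRho_cSigma_biLE_of_biLE hρ hσ h3 hle)
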